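/- For every integer n ≥ 2 and every subset S ⊆ {1,…,n−1}, the generating polynomial of the statistic cro over the sequences in W̃_n whose dot set equals S satisfies Σ_{w ∈ W̃_n, Dot(w) = S} t^{cro(w)} = ψ_{S,n}(t). (In particular, if S contains two consecutive integers, there is no w ∈ W̃_n with Dot(w) = S and both sides are 0.) -/

import Mathlib

open Polynomial Finset

/-- `[m]_t = 1 + t + ⋯ + t^(m-1)`, with `[0]_t = 0`. -/
noncomputable def qnum (m : ℕ) : Polynomial ℤ := ∑ i ∈ Finset.range m, X ^ i

/-- Given the previous value `prev` and a (sorted) list `s₁, …, s_ℓ`, the product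
`[s₁ - prev - 1]_t · [s₂ - s₁ - 1]_t ⋯ [s_ℓ - s_{ℓ-1} - 1]_t`. -/
noncomputable def gapProd : ℕ → List ℕ → Polynomial ℤ
  | _, [] => 1
  | prev, s :: rest => qnum (s - prev - 1) * gapProd s rest

/-- For a sorted list `s₁, …, s_ℓ`, the product
`[s₁]_t · [s₂ - s₁ - 1]_t ⋯ [s_ℓ - s_{ℓ-1} - 1]_t`. -/
noncomputable def psiProd : List ℕ → Polynomial ℤ
  | [] => 1
  | s :: rest => qnum s * gapProd s rest

/-- `S` contains no two consecutive integers. -/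
def NoTwoConsec (S : Finset ℕ) : Prop := ∀ i ∈ S, i + 1 ∉ S

instance (S : Finset ℕ) : Decidable (NoTwoConsec S) :=
  inferInstanceAs (Decidable (∀ i ∈ S, i + 1 ∉ S))

/-- The polynomial `ψ_{S,n}(t) ∈ ℤ[t]`. -/
noncomputable def psi (n : ℕ) (S : Finset ℕ) : Polynomial ℤ :=
  if S ⊆ Finset.Icc 1 (n - 1) ∧ NoTwoConsec S then
    if S = ∅ then qnum (n + 1)
    else X ^ S.card * psiProd (S.sort (· ≤ ·)) *
      (if n - 1 ∈ S then 1 else qnum (n - S.sup id))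
  else 0

/-- The three symbols `•` (dot), `×` (cross), `␣` (blank). -/
inductive Mark : Type where
  | dot : Mark
  | cross : Mark
  | blank : Mark
  deriving DecidableEq

instance : Fintype Mark :=
  ⟨{Mark.dot, Mark.cross, Mark.blank}, fun x => by cases x <;> decide⟩

/-- The letter `w_i` (positions numbered `0, …, m-1`) of a sequence encoded as a
function `Fin m → Mark`; out-of-range positions read as blank. -/
def letterAt {m : ℕ} (w : Fin m → Mark) (i : ℕ) : Mark :=
  if h : i < m then w ⟨i, h⟩ else Mark.blank

/-- Membership in `W̃_n`: `w = w₀ w₁ … w_{n-1}` satisfies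
(i) if `w_i = •` then `i ≥ 1` and `w_{i-1} = ×`;
(ii) a cross in position `j ≤ n-2` is immediately followed by a cross or a dot. -/
def IsWt (n : ℕ) (w : Fin n → Mark) : Prop :=
  (∀ i, letterAt w i = Mark.dot → 1 ≤ i ∧ letterAt w (i - 1) = Mark.cross) ∧
  (∀ j, j ≤ n - 2 → letterAt w j = Mark.cross →
    letterAt w (j + 1) = Mark.cross ∨ letterAt w (j + 1) = Mark.dot)

/-- `Dot(w)`, the set of positions carrying a dot. -/
def DotSet (n : ℕ) (w : Fin n → Mark) : Finset ℕ :=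
  (Finset.range n).filter fun i => letterAt w i = Mark.dot

/-- `cro(w)`, the number of crosses. -/
def cro (n : ℕ) (w : Fin n → Mark) : ℕ :=
  ((Finset.range n).filter fun i => letterAt w i = Mark.cross).card

/-!
Sort the words by their last letter. The constraints defining `W̃_n` only relate neighbouring
letters, so appending a letter to a word of length `n` gives, for the generating polynomial
`F_n(S)` and its part `C_n(S)` over words ending in a cross,
`C_{n+1}(S) = t F_n(S)` and `F_{n+1}(S) = t F_n(S) + (F_n(S) - C_n(S)) + [n ∈ S] C_n(S ∖ {n})`
(append a cross, a blank, or a dot). Hence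
`F_{n+2}(S) = (1 + t) F_{n+1}(S) - t F_n(S) + [n+1 ∈ S] t F_n(S ∖ {n+1})`.
The polynomials `ψ_{S,n}` satisfy the same recurrence: without a new dot only the last factor
`[n - s_ℓ]_t` moves, and `[k+2]_t = (1 + t) [k+1]_t - t [k]_t`; a new dot `n+1` gives
`ψ_{S,n+2} = t ψ_{S ∖ {n+1},n}`. Both sides agree for `n = 0, 1`.
-/

lemma insert_eq_iff_eq_erase {α : Type*} [DecidableEq α] {s t : Finset α} {a : α} (hs : a ∉ s) :
    insert a s = t ↔ a ∈ t ∧ s = t.erase a := by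
  constructor
  · rintro rfl; exact ⟨mem_insert_self a s, (erase_insert hs).symm⟩
  · rintro ⟨ha, rfl⟩; exact insert_erase ha

lemma sort_insert_of_forall_lt {α : Type*} [LinearOrder α] {s : Finset α} {a : α}
    (h : ∀ b ∈ s, b < a) : (insert a s).sort (· ≤ ·) = s.sort (· ≤ ·) ++ [a] := by
  have ha : a ∉ s := fun ha => lt_irrefl a (h a ha)
  have hnodup : (s.sort (· ≤ ·) ++ [a]).Nodup :=
    List.nodup_append.2 ⟨s.sort_nodup _, List.nodup_singleton a, by simpa using ha⟩
  have hset : (s.sort (· ≤ ·) ++ [a]).toFinset = insert a s := by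
    ext; simp
  rw [← hset, List.toFinset_sort _ hnodup, List.pairwise_append]
  refine ⟨s.pairwise_sort _, List.pairwise_singleton _ _, fun b hb c hc => ?_⟩
  rw [List.mem_singleton.1 hc]
  exact (h b ((s.mem_sort _).1 hb)).le

namespace Mark

def Follows (a b : Mark) : Prop :=
  (b = dot → a = cross) ∧ (a = cross → b = cross ∨ b = dot)

@[simp] lemma follows_dot {a : Mark} : a.Follows dot ↔ a = cross := by
  cases a <;> simp [Follows]

@[simp] lemma follows_cross {a : Mark} : a.Follows cross := by
  cases a <;> simp [Follows]

@[simp] lemma follows_blank {a : Mark} : a.Follows blank ↔ a ≠ cross := by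
  cases a <;> simp [Follows]

@[simp] lemma blank_follows {b : Mark} : blank.Follows b ↔ b ≠ dot := by
  cases b <;> simp [Follows]

lemma sum_univ {M : Type*} [AddCommMonoid M] (f : Mark → M) :
    ∑ a, f a = f dot + f cross + f blank := by
  rw [show (univ : Finset Mark) = {dot, cross, blank} from rfl, sum_insert (by decide),
    sum_pair (by decide), add_assoc]

end Mark

def IsAdmissible (n : ℕ) (w : Fin n → Mark) : Prop :=
  ∀ i < n, (if i = 0 then Mark.blank else letterAt w (i - 1)).Follows (letterAt w i)

lemma letterAt_of_le {m i : ℕ} (w : Fin m → Mark) (h : m ≤ i) : letterAt w i = Mark.blank :=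
  dif_neg (by omega)

lemma letterAt_snoc {m : ℕ} (w : Fin m → Mark) (a : Mark) (i : ℕ) :
    letterAt (Fin.snoc w a : Fin (m + 1) → Mark) i = if i = m then a else letterAt w i := by
  rcases lt_trichotomy i m with h | rfl | h
  · simp [letterAt, h, h.ne, Nat.lt_succ_of_lt h, Fin.snoc]
  · simp [letterAt, Fin.snoc]
  · simp [letterAt, h.ne', show ¬i < m by omega, show ¬i < m + 1 by omega]

lemma isAdmissible_snoc {m : ℕ} (w : Fin m → Mark) (a : Mark) :
    IsAdmissible (m + 1) (Fin.snoc w a) ↔ IsAdmissible m w ∧ (letterAt w (m - 1)).Follows a := by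
  unfold IsAdmissible
  rw [Nat.forall_lt_succ_right]
  refine and_congr (forall₂_congr fun i hi => ?_) ?_
  · simp only [letterAt_snoc, hi.ne, if_false, show i - 1 ≠ m by omega]
  · rcases m with _ | m
    · simp [letterAt_snoc, letterAt_of_le]
    · simp [letterAt_snoc]

/-- For `n = 1` the truncated `n - 2 = 0` makes condition (ii) of `IsWt` reject the word `×`;
`IsAdmissible` has no such exception, which lets the recurrence start at `n = 0`. -/
lemma isWt_iff_isAdmissible {n : ℕ} (hn : 2 ≤ n) (w : Fin n → Mark) :
    IsWt n w ↔ IsAdmissible n w := by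
  constructor
  · rintro ⟨hdot, hcross⟩ i hi
    split_ifs with h0
    · subst h0
      simpa using fun h => (hdot 0 h).1
    · refine ⟨fun h => (hdot i h).2, fun h => ?_⟩
      simpa [show i - 1 + 1 = i by omega] using hcross (i - 1) (by omega) h
  · intro h
    refine ⟨fun i hi => ?_, fun j hj hc => ?_⟩
    · have hin : i < n := by
        by_contra hin; rw [letterAt_of_le w (by omega)] at hi; cases hi
      have := h i hin
      split_ifs at this with h0
      · simp [hi] at this
      · exact ⟨by omega, this.1 hi⟩
    · simpa using (h (j + 1) (by omega)).2 hc

lemma filter_letterAt_snoc {m : ℕ} (w : Fin m → Mark) (a b : Mark) :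
    (range (m + 1)).filter (fun i => letterAt (Fin.snoc w a : Fin (m + 1) → Mark) i = b) =
      if a = b then insert m ((range m).filter fun i => letterAt w i = b)
      else (range m).filter fun i => letterAt w i = b := by
  have hw : (range m).filter (fun i => letterAt (Fin.snoc w a : Fin (m + 1) → Mark) i = b) =
      (range m).filter fun i => letterAt w i = b :=
    filter_congr fun i hi => by rw [letterAt_snoc, if_neg (mem_range.1 hi).ne]
  rw [range_add_one, filter_insert, hw, letterAt_snoc, if_pos rfl]

lemma dotSet_subset_range (n : ℕ) (w : Fin n → Mark) : DotSet n w ⊆ range n :=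
  filter_subset _ _

lemma dotSet_snoc {m : ℕ} (w : Fin m → Mark) (a : Mark) :
    DotSet (m + 1) (Fin.snoc w a) = if a = Mark.dot then insert m (DotSet m w) else DotSet m w :=
  filter_letterAt_snoc w a Mark.dot

lemma cro_snoc {m : ℕ} (w : Fin m → Mark) (a : Mark) :
    cro (m + 1) (Fin.snoc w a) = if a = Mark.cross then cro m w + 1 else cro m w := by
  unfold cro
  rw [filter_letterAt_snoc]
  split_ifs
  · exact card_insert_of_notMem fun h => lt_irrefl m (mem_range.1 (filter_subset _ _ h))
  · rfl

open scoped Classical in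
noncomputable def wordPoly (n : ℕ) (P : (Fin n → Mark) → Prop) : ℤ[X] :=
  ∑ w with P w, X ^ cro n w

lemma wordPoly_eq_sum {n : ℕ} (P : (Fin n → Mark) → Prop) [DecidablePred P] :
    wordPoly n P = ∑ w with P w, X ^ cro n w := by
  unfold wordPoly
  congr

lemma wordPoly_congr {n : ℕ} {P Q : (Fin n → Mark) → Prop} (h : ∀ w, P w ↔ Q w) :
    wordPoly n P = wordPoly n Q := by
  rw [funext fun w => propext (h w)]

@[simp] lemma wordPoly_false (n : ℕ) : wordPoly n (fun _ => False) = 0 := by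
  simp [wordPoly]

open scoped Classical in
lemma wordPoly_zero (P : (Fin 0 → Mark) → Prop) :
    wordPoly 0 P = if P Fin.elim0 then 1 else 0 := by
  rw [wordPoly, sum_filter, univ_unique, sum_singleton, Subsingleton.elim default Fin.elim0]
  simp [cro]

lemma wordPoly_and_not {n : ℕ} (P Q : (Fin n → Mark) → Prop) :
    wordPoly n (fun w => P w ∧ ¬Q w) = wordPoly n P - wordPoly n (fun w => P w ∧ Q w) := by
  simp only [wordPoly, sum_filter, ← sum_sub_distrib]
  refine sum_congr rfl fun w _ => ?_
  split_ifs <;> simp_all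

lemma wordPoly_succ {m : ℕ} (P : (Fin (m + 1) → Mark) → Prop) :
    wordPoly (m + 1) P = wordPoly m (fun w => P (Fin.snoc w Mark.dot)) +
      X * wordPoly m (fun w => P (Fin.snoc w Mark.cross)) +
      wordPoly m (fun w => P (Fin.snoc w Mark.blank)) := by
  classical
  simp only [wordPoly, sum_filter, mul_sum]
  rw [← (Fin.snocEquiv fun _ => Mark).sum_comp, Fintype.sum_prod_type, Mark.sum_univ]
  simp [Fin.snocEquiv, cro_snoc, pow_succ, mul_comm]

noncomputable def admPoly (n : ℕ) (S : Finset ℕ) : ℤ[X] :=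
  wordPoly n fun w => IsAdmissible n w ∧ DotSet n w = S

noncomputable def admPolyCross (n : ℕ) (S : Finset ℕ) : ℤ[X] :=
  wordPoly n fun w => (IsAdmissible n w ∧ DotSet n w = S) ∧ letterAt w (n - 1) = Mark.cross

lemma admPoly_zero (S : Finset ℕ) : admPoly 0 S = if S = ∅ then 1 else 0 := by
  simp [admPoly, wordPoly_zero, IsAdmissible, DotSet, eq_comm]

lemma admPolyCross_zero (S : Finset ℕ) : admPolyCross 0 S = 0 := by
  simp [admPolyCross, letterAt]

lemma admPolyCross_succ (m : ℕ) (S : Finset ℕ) : admPolyCross (m + 1) S = X * admPoly m S := by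
  simp [admPolyCross, admPoly, wordPoly_succ, isAdmissible_snoc, dotSet_snoc, letterAt_snoc]

lemma admPoly_succ (m : ℕ) (S : Finset ℕ) :
    admPoly (m + 1) S = (1 + X) * admPoly m S - admPolyCross m S +
      if m ∈ S then admPolyCross m (S.erase m) else 0 := by
  have hinsert (w : Fin m → Mark) : insert m (DotSet m w) = S ↔ m ∈ S ∧ DotSet m w = S.erase m :=
    insert_eq_iff_eq_erase fun h => lt_irrefl m (mem_range.1 (dotSet_subset_range m w h))
  rw [admPoly, wordPoly_succ]
  simp only [isAdmissible_snoc, dotSet_snoc, Mark.follows_dot, Mark.follows_cross,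
    Mark.follows_blank, if_true, hinsert, and_true, reduceCtorEq, if_false]
  have hblank : (wordPoly m fun w => (IsAdmissible m w ∧ letterAt w (m - 1) ≠ Mark.cross) ∧
      DotSet m w = S) = admPoly m S - admPolyCross m S := by
    rw [admPoly, admPolyCross, ← wordPoly_and_not]
    exact wordPoly_congr fun w => by tauto
  have hdot : (wordPoly m fun w => (IsAdmissible m w ∧ letterAt w (m - 1) = Mark.cross) ∧
      m ∈ S ∧ DotSet m w = S.erase m) = if m ∈ S then admPolyCross m (S.erase m) else 0 := by
    split_ifs with hm
    · exact wordPoly_congr fun w => by tauto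
    · simp [hm]
  rw [hblank, hdot]
  change _ + X * admPoly m S + _ = _
  ring

lemma admPoly_one (S : Finset ℕ) : admPoly 1 S = (1 + X) * admPoly 0 S := by
  rw [admPoly_succ, admPolyCross_zero, admPolyCross_zero, sub_zero, ite_self, add_zero]

lemma admPoly_add_two (m : ℕ) (S : Finset ℕ) :
    admPoly (m + 2) S = (1 + X) * admPoly (m + 1) S - X * admPoly m S +
      if m + 1 ∈ S then X * admPoly m (S.erase (m + 1)) else 0 := by
  rw [admPoly_succ, admPolyCross_succ, admPolyCross_succ]

lemma qnum_zero : qnum 0 = 0 := by simp [qnum]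

lemma qnum_one : qnum 1 = 1 := by simp [qnum]

lemma qnum_add_two (k : ℕ) : qnum (k + 2) = (1 + X) * qnum (k + 1) - X * qnum k := by
  simp only [qnum, sum_range_succ]
  ring

lemma gapProd_append (prev x : ℕ) (l : List ℕ) :
    gapProd prev (l ++ [x]) = gapProd prev l * qnum (x - l.getLastD prev - 1) := by
  induction l generalizing prev with
  | nil => simp [gapProd]
  | cons s rest ih => simp only [List.cons_append, gapProd, ih, List.getLastD_cons]; ring

lemma psiProd_append {l : List ℕ} (hl : l ≠ []) (x : ℕ) :
    psiProd (l ++ [x]) = psiProd l * qnum (x - l.getLastD 0 - 1) := by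
  obtain ⟨s, rest, rfl⟩ := List.exists_cons_of_ne_nil hl
  simp only [List.cons_append, psiProd, gapProd_append, List.getLastD_cons]
  ring

lemma getLastD_sort {s : Finset ℕ} (hs : s.Nonempty) : (s.sort (· ≤ ·)).getLastD 0 = s.sup id := by
  have hne : s.sort (· ≤ ·) ≠ [] := by simpa [← List.length_pos_iff] using hs
  rw [List.getLastD_eq_getLast?, List.getLast?_eq_some_getLast hne, Option.getD_some,
    List.getLast_eq_getElem, sorted_last_eq_max', max'_eq_sup', sup'_eq_sup]

lemma psiProd_sort_insert {s : Finset ℕ} (hs : s.Nonempty) {a : ℕ} (h : ∀ b ∈ s, b < a) :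
    psiProd ((insert a s).sort (· ≤ ·)) = psiProd (s.sort (· ≤ ·)) * qnum (a - s.sup id - 1) := by
  rw [sort_insert_of_forall_lt h, psiProd_append (by simpa [← List.length_pos_iff] using hs),
    getLastD_sort hs]

lemma psi_eq_zero {n : ℕ} {S : Finset ℕ} (h : ¬(S ⊆ Icc 1 (n - 1) ∧ NoTwoConsec S)) :
    psi n S = 0 :=
  if_neg h

lemma psi_of_not_subset {n : ℕ} {S : Finset ℕ} (h : ¬S ⊆ Icc 1 (n - 1)) : psi n S = 0 :=
  psi_eq_zero fun h' => h h'.1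

lemma psi_empty (n : ℕ) : psi n ∅ = qnum (n + 1) := by
  simp [psi, NoTwoConsec]

lemma psi_zero (S : Finset ℕ) : psi 0 S = if S = ∅ then 1 else 0 := by
  split_ifs with hS
  · rw [hS, psi_empty, qnum_one]
  · exact psi_of_not_subset (by simpa [subset_empty] using hS)

lemma psi_one (S : Finset ℕ) : psi 1 S = (1 + X) * psi 0 S := by
  by_cases hS : S = ∅
  · simp [hS, psi_empty, qnum, sum_range_succ]
  · rw [psi_of_not_subset (by simpa [subset_empty] using hS), psi_zero, if_neg hS, mul_zero]

lemma psi_eq_zero_of_mem {n k : ℕ} {S : Finset ℕ} (hk : k ∈ S) (hnk : n ≤ k) : psi n S = 0 :=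
  psi_of_not_subset fun h => by have := mem_Icc.1 (h hk); omega

/-- The factor `[n - s_ℓ]_t` vanishes exactly when `s_ℓ = n`, which is when `ψ_{S,n}` is zero
because `S ⊄ [1, n-1]`. -/
lemma psi_eq_of_subset_Icc {n : ℕ} {S : Finset ℕ} (hne : S.Nonempty) (hS : S ⊆ Icc 1 n)
    (hst : NoTwoConsec S) :
    psi n S = X ^ #S * psiProd (S.sort (· ≤ ·)) * qnum (n - S.sup id) := by
  have hsup : S.sup id ≤ n := Finset.sup_le fun x hx => (mem_Icc.1 (hS hx)).2
  by_cases hS' : S ⊆ Icc 1 (n - 1)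
  · rw [psi, if_pos ⟨hS', hst⟩, if_neg hne.ne_empty]
    split_ifs with hn
    · have : S.sup id = n - 1 := le_antisymm
        (Finset.sup_le fun x hx => (mem_Icc.1 (hS' hx)).2) (le_sup (f := id) hn)
      rw [this, show n - (n - 1) = 1 by have := mem_Icc.1 (hS' hn); omega, qnum_one]
    · rfl
  · obtain ⟨x, hx, hx'⟩ := not_subset.1 hS'
    have hxn : x = n := by have := mem_Icc.1 (hS hx); rw [mem_Icc] at hx'; omega
    have : S.sup id = n := le_antisymm hsup (hxn ▸ le_sup (f := id) hx)
    rw [psi_of_not_subset hS', this, Nat.sub_self, qnum_zero, mul_zero]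

lemma insert_subset_Icc_noTwoConsec_iff {m : ℕ} {T : Finset ℕ} (hT : m + 1 ∉ T) :
    (insert (m + 1) T ⊆ Icc 1 (m + 1) ∧ NoTwoConsec (insert (m + 1) T)) ↔
      (T ⊆ Icc 1 (m - 1) ∧ NoTwoConsec T) := by
  constructor
  · rintro ⟨hsub, hst⟩
    refine ⟨fun x hx => ?_, fun i hi hi' => hst i (mem_insert_of_mem hi) (mem_insert_of_mem hi')⟩
    have hx1 := mem_Icc.1 (hsub (mem_insert_of_mem hx))
    have hxm : x ≠ m := fun h => hst x (mem_insert_of_mem hx) (h ▸ mem_insert_self _ _)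
    have hxm' : x ≠ m + 1 := fun h => hT (h ▸ hx)
    rw [mem_Icc]; omega
  · rintro ⟨hsub, hst⟩
    refine ⟨insert_subset (by simp) (hsub.trans (Icc_subset_Icc_right (by omega))), ?_⟩
    intro i hi hi'
    rcases mem_insert.1 hi with rfl | hi
    · rcases mem_insert.1 hi' with h | h
      · omega
      · have := mem_Icc.1 (hsub h); omega
    · rcases mem_insert.1 hi' with h | h
      · have := mem_Icc.1 (hsub hi); omega
      · exact hst i hi h

lemma psi_add_two_insert {m : ℕ} {T : Finset ℕ} (hT : m + 1 ∉ T) :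
    psi (m + 2) (insert (m + 1) T) = X * psi m T := by
  by_cases hV : T ⊆ Icc 1 (m - 1) ∧ NoTwoConsec T
  · obtain ⟨hsub, hst⟩ := (insert_subset_Icc_noTwoConsec_iff hT).2 hV
    have hsup : (insert (m + 1) T).sup id = m + 1 := by
      rw [sup_insert, id, sup_eq_left]
      exact Finset.sup_le fun x hx => (mem_Icc.1 (hV.1 hx)).2.trans (by omega)
    rw [psi_eq_of_subset_Icc (insert_nonempty _ _)
        (hsub.trans (Icc_subset_Icc_right (by omega))) hst,
      hsup, card_insert_of_notMem hT, show m + 2 - (m + 1) = 1 by omega, qnum_one]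
    rcases T.eq_empty_or_nonempty with rfl | hne
    · simp [psi_empty, psiProd, gapProd]
    · have hlt : ∀ x ∈ T, x < m + 1 := fun x hx => by have := mem_Icc.1 (hV.1 hx); omega
      rw [psiProd_sort_insert hne hlt, psi_eq_of_subset_Icc hne
        (hV.1.trans (Icc_subset_Icc_right (Nat.sub_le m 1))) hV.2,
        show m + 1 - T.sup id - 1 = m - T.sup id by omega]
      ring
  · rw [psi_eq_zero hV, psi_eq_zero (fun h => hV ((insert_subset_Icc_noTwoConsec_iff hT).1 h)),
      mul_zero]

lemma psi_add_two_of_notMem {m : ℕ} {S : Finset ℕ} (hS : m + 1 ∉ S) :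
    psi (m + 2) S = (1 + X) * psi (m + 1) S - X * psi m S := by
  by_cases hV : S ⊆ Icc 1 m ∧ NoTwoConsec S
  · rcases S.eq_empty_or_nonempty with rfl | hne
    · simp only [psi_empty, qnum_add_two]
    have hsup : S.sup id ≤ m := Finset.sup_le fun x hx => (mem_Icc.1 (hV.1 hx)).2
    have hsub (k : ℕ) : S ⊆ Icc 1 (m + k) := hV.1.trans (Icc_subset_Icc_right (by omega))
    rw [psi_eq_of_subset_Icc hne (hsub 2) hV.2, psi_eq_of_subset_Icc hne (hsub 1) hV.2,
      psi_eq_of_subset_Icc hne hV.1 hV.2, show m + 2 - S.sup id = m - S.sup id + 2 by omega,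
      show m + 1 - S.sup id = m - S.sup id + 1 by omega, qnum_add_two]
    ring
  · have hsub (k : ℕ) (hk : k ≤ 2) : ¬(S ⊆ Icc 1 (m + k - 1) ∧ NoTwoConsec S) := by
      refine fun h => hV ⟨fun x hx => ?_, h.2⟩
      have := mem_Icc.1 (h.1 hx)
      have : x ≠ m + 1 := fun e => hS (e ▸ hx)
      rw [mem_Icc]; omega
    rw [psi_eq_zero (hsub 2 le_rfl), psi_eq_zero (hsub 1 one_le_two),
      psi_eq_zero (n := m) (hsub 0 zero_le_two)]
    ring

lemma psi_add_two (m : ℕ) (S : Finset ℕ) :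
    psi (m + 2) S = (1 + X) * psi (m + 1) S - X * psi m S +
      if m + 1 ∈ S then X * psi m (S.erase (m + 1)) else 0 := by
  split_ifs with hS
  · rw [← insert_erase hS, psi_add_two_insert (notMem_erase _ _),
      psi_eq_zero_of_mem (mem_insert_self _ _) le_rfl,
      psi_eq_zero_of_mem (mem_insert_self _ _) (Nat.le_succ m), erase_insert (notMem_erase _ _)]
    ring
  · rw [psi_add_two_of_notMem hS, add_zero]

theorem admPoly_eq_psi : ∀ (n : ℕ) (S : Finset ℕ), admPoly n S = psi n S
  | 0, S => by rw [admPoly_zero, psi_zero]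
  | 1, S => by rw [admPoly_one, psi_one, admPoly_zero, psi_zero]
  | m + 2, S => by
    rw [admPoly_add_two, psi_add_two, admPoly_eq_psi (m + 1), admPoly_eq_psi m,
      admPoly_eq_psi m]

open scoped Classical in
theorem Wt_genfun_eq_psi_general (n : ℕ) (hn : 2 ≤ n) (S : Finset ℕ) :
    ∑ w ∈ Finset.univ.filter (fun w : Fin n → Mark => IsWt n w ∧ DotSet n w = S),
      (X : Polynomial ℤ) ^ cro n w = psi n S := by
  rw [← wordPoly_eq_sum, ← admPoly_eq_psi, admPoly]
  exact wordPoly_congr fun w => by rw [isWt_iff_isAdmissible hn]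

open scoped Classical in
/-- For `n ≥ 2` and `S ⊆ [1, n-1]`:
`∑_{w ∈ W̃_n, Dot(w) = S} t^{cro(w)} = ψ_{S,n}(t)`. -/
theorem Wt_genfun_eq_psi (n : ℕ) (hn : 2 ≤ n) (S : Finset ℕ)
    (hS : S ⊆ Finset.Icc 1 (n - 1)) :
    ∑ w ∈ Finset.univ.filter (fun w : Fin n → Mark => IsWt n w ∧ DotSet n w = S),
      (X : Polynomial ℤ) ^ cro n w = psi n S :=
  Wt_genfun_eq_psi_general n hn S
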